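/- arXiv:1902.03198 — 2 statements merged into one kernel-verified Lean document; each statement's English description precedes it below -/
import Mathlib

section
/- Let $m, p \ge 1$, let $A_{11} \in \mathbb{R}^{m\times m}$, $A_{12} \in \mathbb{R}^{m\times p}$, $A_{21} \in \mathbb{R}^{p\times m}$, $A_{22} \in \mathbb{R}^{p\times p}$, and let $\hat\phi : \mathbb{R} \to \mathbb{R}^m$, $\tilde\phi : \mathbb{R} \to \mathbb{R}^p$ be differentiable functions satisfying $\hat\phi'(t) = A_{11}\hat\phi(t) + A_{12}\tilde\phi(t)$ and $\tilde\phi'(t) = A_{21}\hat\phi(t) + A_{22}\tilde\phi(t)$ for all $t \ge 0$, with $\tilde\phi(0) = \tilde{x}$. Then for all $t \ge 0$, $\hat\phi'(t) = A_{11}\hat\phi(t) + A_{12}\,\exp(tA_{22})\,\tilde{x} + \int_0^t A_{12}\,\exp((t-s)A_{22})\,A_{21}\,\hat\phi(s)\,ds$. -/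
open scoped Matrix
open NormedSpace

attribute [local instance] Matrix.linftyOpNormedAddCommGroup Matrix.linftyOpNormedSpace
  Matrix.linftyOpNormedRing Matrix.linftyOpNormedAlgebra

/-- `Matrix.mulVec` as a continuous bilinear map. -/
noncomputable def mvCLM (m p : ℕ) :
    Matrix (Fin p) (Fin m) ℝ →L[ℝ] (Fin m → ℝ) →L[ℝ] (Fin p → ℝ) :=
  LinearMap.toContinuousLinearMap
    { toFun := fun M => LinearMap.toContinuousLinearMap (Matrix.toLin' M)
      map_add' := by intro M N; ext v i; simp [Matrix.add_mulVec]
      map_smul' := by intro c M; ext v i; simp [Matrix.smul_mulVec] }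

@[simp] lemma mvCLM_apply (m p : ℕ) (M : Matrix (Fin p) (Fin m) ℝ) (v : Fin m → ℝ) :
    mvCLM m p M v = M.mulVec v := by
  simp [mvCLM, Matrix.toLin'_apply]

/-- Mori-Zwanzig reduction of a linear constant-coefficient system by variation of
constants: the resolved variables satisfy an equation with a Markovian term, a noise
term and a memory term. -/
theorem mori_zwanzig_linear
    (m p : ℕ) (hm : 1 ≤ m) (hp : 1 ≤ p)
    (A11 : Matrix (Fin m) (Fin m) ℝ) (A12 : Matrix (Fin m) (Fin p) ℝ)
    (A21 : Matrix (Fin p) (Fin m) ℝ) (A22 : Matrix (Fin p) (Fin p) ℝ)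
    (φh : ℝ → (Fin m → ℝ)) (φt : ℝ → (Fin p → ℝ))
    (xt : Fin p → ℝ)
    (hφh : ∀ t : ℝ, 0 ≤ t →
      HasDerivAt φh (A11.mulVec (φh t) + A12.mulVec (φt t)) t)
    (hφt : ∀ t : ℝ, 0 ≤ t →
      HasDerivAt φt (A21.mulVec (φh t) + A22.mulVec (φt t)) t)
    (h0 : φt 0 = xt) :
    ∀ t : ℝ, 0 ≤ t →
      HasDerivAt φh
        (A11.mulVec (φh t)
          + A12.mulVec ((exp (t • A22)).mulVec xt)
          + fun i => ∫ s in (0:ℝ)..t,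
              ((A12 * exp ((t - s) • A22) * A21).mulVec (φh s)) i) t := by
  intro t ht
  set E : ℝ → Matrix (Fin p) (Fin p) ℝ := fun s => exp ((t - s) • A22) with hE
  have hEderiv : ∀ s : ℝ, HasDerivAt E (-(E s * A22)) s := by
    intro s
    have h1 : HasDerivAt (fun u : ℝ => exp (u • A22)) (exp ((t - s) • A22) * A22) (t - s) :=
      hasDerivAt_exp_smul_const A22 (t - s)
    have h2 : HasDerivAt (fun u : ℝ => t - u) (-1) s := by
      simpa using (hasDerivAt_id s).const_sub t
    have := h1.scomp s h2
    simp only [neg_one_smul] at this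
    exact this
  have hEcont : Continuous E := continuous_iff_continuousAt.mpr fun s => (hEderiv s).continuousAt
  set f : ℝ → (Fin p → ℝ) := fun s => (E s * A21).mulVec (φh s) with hf
  have hfcont : ContinuousOn f (Set.uIcc 0 t) := by
    rw [Set.uIcc_of_le ht]
    have h1 : ContinuousOn (fun s => mvCLM p p (E s)) (Set.Icc 0 t) :=
      (((mvCLM p p).continuous).comp hEcont).continuousOn
    have h2 : ContinuousOn (fun s => A21.mulVec (φh s)) (Set.Icc 0 t) := by
      intro s hs
      exact (((((mvCLM m p) A21).continuous.continuousAt).comp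
        (hφh s hs.1).continuousAt).continuousWithinAt).congr (fun u _ => by simp) (by simp)
    have := h1.clm_apply h2
    refine this.congr fun s _ => ?_
    simp [hf, Matrix.mulVec_mulVec]
  have hint : IntervalIntegrable f MeasureTheory.volume 0 t :=
    hfcont.intervalIntegrable
  -- variation of constants
  have hg : ∀ s ∈ Set.uIcc (0:ℝ) t,
      HasDerivAt (fun u => mvCLM p p (E u) (φt u)) (f s) s := by
    intro s hs
    rw [Set.uIcc_of_le ht] at hs
    have hc : HasDerivAt (fun u => mvCLM p p (E u)) (mvCLM p p (-(E s * A22))) s :=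
      (mvCLM p p).hasFDerivAt.comp_hasDerivAt s (hEderiv s)
    have h := hc.clm_apply (hφt s hs.1)
    refine h.congr_deriv ?_
    simp only [mvCLM_apply, hf]
    rw [Matrix.neg_mulVec, Matrix.mulVec_add, ← Matrix.mulVec_mulVec, ← Matrix.mulVec_mulVec]
    abel
  have hFTC := intervalIntegral.integral_eq_sub_of_hasDerivAt hg hint
  have hE0 : E t = 1 := by simp [hE]
  have hEt : E 0 = exp (t • A22) := by simp [hE]
  have key : φt t = (exp (t • A22)).mulVec xt + ∫ s in (0:ℝ)..t, f s := by
    rw [hFTC, hE0, hEt, h0]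
    simp
  -- now rewrite the target derivative
  have hmain := hφh t ht
  convert hmain using 1
  rw [key, Matrix.mulVec_add, ← add_assoc]
  congr 1
  funext i
  have hproj := ((ContinuousLinearMap.proj (R := ℝ) (φ := fun _ : Fin m => ℝ) i).comp
    ((mvCLM p m) A12)).intervalIntegral_comp_comm hint
  simp only [ContinuousLinearMap.comp_apply, ContinuousLinearMap.proj_apply,
    mvCLM_apply] at hproj
  rw [← hproj]
  congr 1
  funext s
  rw [Matrix.mulVec_mulVec, Matrix.mul_assoc]
end

section
/- (Generalized Langevin operator identity, matrix case.) Let $L, P \in \mathbb{R}^{n\times n}$ with $P^2 = P$, and set $Q = I - P$. Then for every $t \in \mathbb{R}$, $\exp(tL)\,L = \exp(tL)\,P L + \exp(tQL)\,Q L + \int_0^t \exp((t-s)L)\,P L\,\exp(sQL)\,Q L\,ds$. -/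
open scoped Matrix
open NormedSpace

set_option maxHeartbeats 1000000

attribute [local instance] Matrix.linftyOpNormedAddCommGroup Matrix.linftyOpNormedRing Matrix.linftyOpNormedAlgebra

/-- Generalized Langevin operator identity (matrix case): for a projection `P` with
`P² = P` and `Q = I - P`,
`exp(tL) L = exp(tL) P L + exp(tQL) Q L + ∫₀ᵗ exp((t-s)L) P L exp(sQL) Q L ds`,
with the integral taken entrywise. The three terms on the right are the Markovian,
noise and memory terms of the Mori-Zwanzig decomposition. -/
theorem generalized_langevin_matrix
    (n : ℕ) (L P : Matrix (Fin n) (Fin n) ℝ) (hP : P * P = P) (t : ℝ) :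
    exp (t • L) * L
      = exp (t • L) * P * L
        + exp (t • ((1 - P) * L)) * (1 - P) * L
        + Matrix.of (fun i j =>
            ∫ s in (0:ℝ)..t,
              (exp ((t - s) • L) * P * L
                * exp (s • ((1 - P) * L)) * (1 - P) * L) i j) := by
  set A : Matrix (Fin n) (Fin n) ℝ := (1 - P) * L with hA
  set G : ℝ → Matrix (Fin n) (Fin n) ℝ :=
    fun s => exp ((t - s) • L) * P * L * exp (s • A) with hG
  have hGcont : Continuous G := by
    apply Continuous.mul
    apply Continuous.mul
    apply Continuous.mul
    · exact exp_continuous.comp ((continuous_const.sub continuous_id).smul continuous_const)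
    · exact continuous_const
    · exact continuous_const
    · exact exp_continuous.comp (continuous_id.smul continuous_const)
  -- Duhamel: ∫₀ᵗ G = exp(tL) - exp(tA)
  have key : (∫ s in (0:ℝ)..t, G s) = exp (t • L) - exp (t • A) := by
    have hF : ∀ s ∈ Set.uIcc (0:ℝ) t,
        HasDerivAt (fun u => exp ((t - u) • L) * exp (u • A)) (-(G s)) s := by
      intro s _
      have h1 : HasDerivAt (fun u : ℝ => exp ((t - u) • L))
          (-(exp ((t - s) • L) * L)) s := by
        have h0 : HasDerivAt (fun u : ℝ => t - u) (-1 : ℝ) s := by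
          simpa using (hasDerivAt_id s).const_sub t
        have := (hasDerivAt_exp_smul_const (𝕂 := ℝ) L (t - s)).scomp s h0
        simp [Function.comp_def] at this
        exact this
      have h2 : HasDerivAt (fun u : ℝ => exp (u • A)) (A * exp (s • A)) s :=
        hasDerivAt_exp_smul_const' (𝕂 := ℝ) A s
      have := h1.mul h2
      refine this.congr_deriv ?_
      simp only [hG, hA]
      noncomm_ring
    have hint := (hGcont.neg).intervalIntegrable (μ := MeasureTheory.volume) 0 t
    have := intervalIntegral.integral_eq_sub_of_hasDerivAt hF hint
    rw [intervalIntegral.integral_neg] at this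
    simp only [sub_self, zero_smul, exp_zero, one_mul, mul_one] at this
    have h := neg_eq_iff_eq_neg.mp this
    rw [h]; ring_nf; abel
  -- entrywise integral equals entry of matrix integral
  have hentry : Matrix.of (fun i j =>
      ∫ s in (0:ℝ)..t, (G s * (1 - P) * L) i j)
      = (exp (t • L) - exp (t • A)) * ((1 - P) * L) := by
    rw [← key]
    ext i j
    have hlin : ∀ i j, ∃ φ : Matrix (Fin n) (Fin n) ℝ →L[ℝ] ℝ,
        ∀ M, φ M = (M * ((1 - P) * L)) i j := by
      intro i j
      refine ⟨LinearMap.toContinuousLinearMap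
        { toFun := fun M => (M * ((1 - P) * L)) i j
          map_add' := by intro x y; simp [Matrix.add_mul]
          map_smul' := by intro c x; simp [Matrix.smul_mul] }, fun M => rfl⟩
    obtain ⟨φ, hφ⟩ := hlin i j
    have hGI := hGcont.intervalIntegrable (μ := MeasureTheory.volume) 0 t
    have := φ.intervalIntegral_comp_comm hGI (a := 0) (b := t)
    replace this : ∫ s in (0:ℝ)..t, (G s * ((1 - P) * L)) i j
        = ((∫ s in (0:ℝ)..t, G s) * ((1 - P) * L)) i j :=
      (intervalIntegral.integral_congr (fun x _ => (hφ (G x)).symm)).trans (this.trans (hφ _))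
    calc (Matrix.of fun i j => ∫ s in (0:ℝ)..t, (G s * (1 - P) * L) i j) i j
        = ∫ s in (0:ℝ)..t, (G s * ((1 - P) * L)) i j := by
          simp [Matrix.of_apply, mul_assoc]
      _ = ((∫ s in (0:ℝ)..t, G s) * ((1 - P) * L)) i j := this
      _ = _ := rfl
  have hrw : (fun i j => ∫ s in (0:ℝ)..t,
        (exp ((t - s) • L) * P * L * exp (s • ((1 - P) * L)) * (1 - P) * L) i j)
      = (fun i j => ∫ s in (0:ℝ)..t, (G s * (1 - P) * L) i j) := rfl
  rw [hrw, hentry]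
  noncomm_ring
end
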